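/- Let a, b, c ∈ F with c ≠ 0 and a^n ≠ 1, b^n ≠ 1 for all n ≥ 1, and set ε_n = (b^n−1)c^{−n}/(1−a^n), τ_n = 1 − a^n, η_n = (1 − a^n)c^n. For a partition μ set e_μ = 1 + (1−a) Σ_{i=1}^{l(μ)} (b^{μ_i}−1) a^{i−1}, and assume the values e_ν are pairwise distinct over partitions ν of a fixed weight N. For each partition λ of N let Q_λ = Σ_{μ ⊢ N, μ ≥ λ} C_{λμ} q^ε_μ be the unique element with C_{λλ} = 1 satisfying X_0 Q_λ = e_λ Q_λ. Then ⟨Q_λ, Q_μ⟩ = 0 for all partitions λ ≠ μ of N. -/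

import Mathlib

open Finset MvPolynomial

/-- The power sum `p_n`, the `n`-th variable of `Λ = F[p₁,p₂,…]`. -/
noncomputable def pv (F : Type*) [Field F] (n : ℕ) : MvPolynomial ℕ+ F :=
  if h : 0 < n then X ⟨n, h⟩ else 1

/-- `p_μ = p_{μ₁} ⋯ p_{μ_s}`. -/
noncomputable def pMul (F : Type*) [Field F] (m : Multiset ℕ) : MvPolynomial ℕ+ F :=
  (m.map (pv F)).prod

/-- `z_λ = Π_i i^{m_i}·m_i!`. -/
def zMult (m : Multiset ℕ) : ℕ :=
  m.toFinset.prod fun i => i ^ m.count i * (m.count i).factorial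

/-- The generalized complete symmetric function: `q^ε_n = Σ_{λ ⊢ n} z_λ⁻¹ ε_λ⁻¹ p_λ`
for `n ≥ 0` (giving `q^ε_0 = 1`) and `q^ε_n = 0` for `n < 0`. -/
noncomputable def qeps {F : Type*} [Field F] (ε : ℕ → F) (n : ℤ) : MvPolynomial ℕ+ F :=
  if n < 0 then 0 else
    ∑ μ : Nat.Partition n.toNat,
      ((zMult μ.parts : F) * (μ.parts.map ε).prod)⁻¹ • pMul F μ.parts

/-- The weight `Π_i i^{d_i} (d_i)! ε_i^{d_i}` of a monomial, i.e. `z_λ ε_λ` for the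
partition `λ` with multiplicities `d`. -/
noncomputable def wform {F : Type*} [Field F] (ε : ℕ → F) (d : ℕ+ →₀ ℕ) : F :=
  d.prod fun i k => ((i : ℕ) : F) ^ k * (Nat.factorial k : F) * ε (i : ℕ) ^ k

/-- The bilinear form on `Λ` determined by `⟨p_λ, p_μ⟩ = δ_{λμ} z_λ ε_λ`. -/
noncomputable def bform {F : Type*} [Field F] (ε : ℕ → F) (f g : MvPolynomial ℕ+ F) : F :=
  ∑ d ∈ f.support, MvPolynomial.coeff d f * MvPolynomial.coeff d g * wform ε d

/-- The annihilation operator `h_n = n ε_n ∂/∂p_n` (`n ≥ 1`). -/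
noncomputable def hpos {F : Type*} [Field F] (ε : ℕ → F) (n : ℕ) :
    Module.End F (MvPolynomial ℕ+ F) :=
  if h : 0 < n then ((n : F) * ε n) • (pderiv (⟨n, h⟩ : ℕ+)).toLinearMap else 1

/-- `h_ν = h_{ν₁} ⋯ h_{ν_s}` (the `h_n`, `n ≥ 1`, commute with each other, so any
ordering gives the same operator). -/
noncomputable def hMul {F : Type*} [Field F] (ε : ℕ → F) (m : Multiset ℕ) :
    Module.End F (MvPolynomial ℕ+ F) :=
  ((Multiset.sort m (· ≥ ·)).map (hpos ε)).prod

/-- The maximal weight `Σ_i i·d_i` of a monomial occurring in `f`. -/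
def wdeg {F : Type*} [Field F] (f : MvPolynomial ℕ+ F) : ℕ :=
  f.support.sup fun d => d.sum fun i k => (i : ℕ) * k

/-- The operator `X₀ = Σ_{(μ,ν) : |μ|=|ν|} z_μ⁻¹ η_μ z_ν⁻¹ τ_ν h_{-μ} h_ν`; every
term with `|ν| > wdeg f` annihilates `f`, so the sum may be truncated there. -/
noncomputable def X0op {F : Type*} [Field F] (ε η τ : ℕ → F) (f : MvPolynomial ℕ+ F) :
    MvPolynomial ℕ+ F :=
  ∑ N ∈ Finset.range (wdeg f + 1), ∑ μ : Nat.Partition N, ∑ ν : Nat.Partition N,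
    ((zMult μ.parts : F)⁻¹ * (μ.parts.map η).prod *
      (zMult ν.parts : F)⁻¹ * (ν.parts.map τ).prod) •
        (pMul F μ.parts * hMul ε ν.parts f)

/-- `R_0 = 1` and `R_n = Σ_{λ ⊢ n} z_λ⁻¹ η_λ p_λ` for `n ≥ 1`. -/
noncomputable def Rgen {F : Type*} [Field F] (η : ℕ → F) (n : ℕ) : MvPolynomial ℕ+ F :=
  ∑ μ : Nat.Partition n, ((zMult μ.parts : F)⁻¹ * (μ.parts.map η).prod) • pMul F μ.parts

/-- The eigenvalue `e_λ = 1 + (1-a) Σ_{i=1}^{l(λ)} (b^{λ_i}-1) a^{i-1}`. -/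
def eigval {F : Type*} [Field F] (a b : F) (l : List ℕ) : F :=
  1 + (1 - a) * ∑ i : Fin l.length, (b ^ (l.get i) - 1) * a ^ (i : ℕ)

/-- A partition as a weakly decreasing list of positive integers. -/
def IsPartitionList (l : List ℕ) : Prop := l.Pairwise (· ≥ ·) ∧ ∀ x ∈ l, 0 < x

/-- Dominance order: every partial sum of `μ` is at least that of `l`
(parts padded by zeros). -/
def Dominates (μ l : List ℕ) : Prop := ∀ i : ℕ, (l.take i).sum ≤ (μ.take i).sum

/-- The weakly decreasing list of elements of a multiset. -/
def sortDesc (m : Multiset ℕ) : List ℕ := Multiset.sort m (· ≥ ·)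

/-- The partitions of weight `N`, as weakly decreasing lists. -/
def partitionsOfWeight (N : ℕ) : Finset (List ℕ) :=
  Finset.univ.image fun μ : Nat.Partition N => sortDesc μ.parts

/-- `q^ε_λ = q^ε_{λ₁} ⋯ q^ε_{λ_s}`. -/
noncomputable def qepsList {F : Type*} [Field F] (ε : ℕ → F) (l : List ℕ) :
    MvPolynomial ℕ+ F := (l.map fun n => qeps ε (n : ℤ)).prod

/-!
The form `⟨·,·⟩` makes `h_n = n ε_n ∂/∂p_n` the adjoint of multiplication by `p_n`: on
monomials, `⟨p_n p^d, p^{d+e_n}⟩ / ⟨p^d, p^d⟩ = n (d_n + 1) ε_n`, which is exactly the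
factor produced by `n ε_n ∂/∂p_n` on `p^{d+e_n}`. Hence the adjoint of `h_{-μ} h_ν` is
`h_{-ν} h_μ`, and since `η_n = τ_n c^n` the coefficient `η_μ τ_ν = τ_μ τ_ν c^N` of `X₀` is
symmetric in `(μ, ν)` when `|μ| = |ν| = N`. So `X₀` is self-adjoint, and its eigenvectors
for distinct eigenvalues are orthogonal.
-/

section BilinearForm

variable {F : Type*} [Field F] (ε : ℕ → F)

lemma bform_eq_sum_of_support_subset {f : MvPolynomial ℕ+ F} (g : MvPolynomial ℕ+ F)
    {S : Finset (ℕ+ →₀ ℕ)} (hS : f.support ⊆ S) :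
    bform ε f g = ∑ d ∈ S, coeff d f * coeff d g * wform ε d :=
  Finset.sum_subset hS fun d _ hd => by rw [notMem_support_iff.mp hd, zero_mul, zero_mul]

lemma bform_comm (f g : MvPolynomial ℕ+ F) : bform ε f g = bform ε g f := by
  rw [bform_eq_sum_of_support_subset ε g subset_union_left,
    bform_eq_sum_of_support_subset ε f (subset_union_right (s₁ := f.support))]
  exact sum_congr rfl fun d _ => by ring

@[simp]
lemma bform_zero_left (g : MvPolynomial ℕ+ F) : bform ε 0 g = 0 := by simp [bform]

lemma bform_add_left (f f' g : MvPolynomial ℕ+ F) :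
    bform ε (f + f') g = bform ε f g + bform ε f' g := by
  rw [bform_eq_sum_of_support_subset ε g support_add,
    bform_eq_sum_of_support_subset ε g subset_union_left,
    bform_eq_sum_of_support_subset ε g (subset_union_right (s₁ := f.support)),
    ← sum_add_distrib]
  exact sum_congr rfl fun d _ => by rw [coeff_add]; ring

lemma bform_smul_left (r : F) (f g : MvPolynomial ℕ+ F) :
    bform ε (r • f) g = r * bform ε f g := by
  rw [bform_eq_sum_of_support_subset ε g support_smul, bform, mul_sum]
  exact sum_congr rfl fun d _ => by rw [coeff_smul, smul_eq_mul]; ring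

lemma bform_smul_right (r : F) (f g : MvPolynomial ℕ+ F) :
    bform ε f (r • g) = r * bform ε f g := by
  rw [bform_comm, bform_smul_left, bform_comm]

lemma bform_sum_left {ι : Type*} (s : Finset ι) (f : ι → MvPolynomial ℕ+ F)
    (g : MvPolynomial ℕ+ F) : bform ε (∑ i ∈ s, f i) g = ∑ i ∈ s, bform ε (f i) g := by
  classical
  induction s using Finset.induction_on with
  | empty => simp
  | insert i s hi ih => rw [sum_insert hi, sum_insert hi, bform_add_left, ih]

lemma bform_eq_zero_of_eigenvalue_ne {T : MvPolynomial ℕ+ F → MvPolynomial ℕ+ F}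
    (hT : ∀ f g, bform ε (T f) g = bform ε f (T g)) {f g : MvPolynomial ℕ+ F} {s t : F}
    (hf : T f = s • f) (hg : T g = t • g) (hst : s ≠ t) : bform ε f g = 0 := by
  have h := hT f g
  rw [hf, hg, bform_smul_left, bform_smul_right] at h
  exact (mul_eq_mul_right_iff.mp h).resolve_left hst

end BilinearForm

section Adjoint

variable {F : Type*} [Field F] (ε : ℕ → F)

lemma wform_add_single (d : ℕ+ →₀ ℕ) (i : ℕ+) :
    wform ε (d + Finsupp.single i 1) =
      ((i : ℕ) : F) * ((d i + 1 : ℕ) : F) * ε i * wform ε d := by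
  have h0 : ∀ (j : ℕ+), ((j : ℕ) : F) ^ 0 * (Nat.factorial 0 : F) * ε j ^ 0 = 1 := by simp
  rw [wform, wform, ← Finsupp.mul_prod_erase' _ i _ h0, ← Finsupp.mul_prod_erase' d i _ h0,
    Finsupp.erase_add, Finsupp.erase_single, add_zero, Finsupp.add_apply,
    Finsupp.single_eq_same, pow_succ, pow_succ, Nat.factorial_succ]
  push_cast
  ring

lemma bform_X_mul (i : ℕ+) (u v : MvPolynomial ℕ+ F) :
    bform ε (X i * u) v = bform ε u ((((i : ℕ) : F) * ε i) • pderiv i v) := by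
  rw [bform, support_X_mul, sum_map, bform]
  refine sum_congr rfl fun d _ => ?_
  rw [addLeftEmbedding_apply, coeff_X_mul, add_comm, wform_add_single, coeff_smul,
    smul_eq_mul, coeff_pderiv]
  push_cast
  ring

lemma bform_pv_mul (n : ℕ) (u v : MvPolynomial ℕ+ F) :
    bform ε (pv F n * u) v = bform ε u (hpos ε n v) := by
  by_cases hn : 0 < n
  · rw [pv, dif_pos hn, hpos, dif_pos hn]
    exact bform_X_mul ε ⟨n, hn⟩ u v
  · rw [pv, dif_neg hn, hpos, dif_neg hn, one_mul, Module.End.one_apply]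

lemma bform_list_prod_pv_mul (L : List ℕ) (u v : MvPolynomial ℕ+ F) :
    bform ε ((L.map (pv F)).prod * u) v = bform ε u ((L.reverse.map (hpos ε)).prod v) := by
  induction L generalizing v with
  | nil => simp
  | cons n L ih =>
    rw [List.map_cons, List.prod_cons, mul_assoc, bform_pv_mul, ih, List.reverse_cons,
      List.map_append, List.prod_append, List.map_singleton, List.prod_singleton,
      Module.End.mul_apply]

lemma bform_pMul_mul (m : Multiset ℕ) (u v : MvPolynomial ℕ+ F) :
    bform ε (pMul F m * u) v = bform ε u (hMul ε m v) := by
  have h : pMul F m = (((Multiset.sort m (· ≥ ·)).reverse).map (pv F)).prod := by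
    rw [pMul, List.map_reverse, List.prod_reverse, ← Multiset.prod_coe, ← Multiset.map_coe,
      Multiset.sort_eq]
  rw [h, bform_list_prod_pv_mul, List.reverse_reverse, hMul]

end Adjoint

section Weight

variable {F : Type*} [Field F] (ε : ℕ → F)

local notation "wt" => Finsupp.weight (PNat.val : ℕ+ → ℕ)

lemma weight_le_wdeg {f : MvPolynomial ℕ+ F} {d : ℕ+ →₀ ℕ} (hd : d ∈ f.support) :
    wt d ≤ wdeg f := by
  have h : wt d = d.sum fun i k => (i : ℕ) * k := by
    simp only [Finsupp.weight_apply, smul_eq_mul, mul_comm]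
  exact h ▸ le_sup (f := fun d : ℕ+ →₀ ℕ => d.sum fun i k => (i : ℕ) * k) hd

lemma weight_lt_of_mem_support_pderiv (i : ℕ+) {M : ℕ} {f : MvPolynomial ℕ+ F}
    (hf : ∀ d ∈ f.support, wt d < M + i) : ∀ d ∈ (pderiv i f).support, wt d < M := by
  intro d hd
  have hcoeff : coeff (d + Finsupp.single i 1) f ≠ 0 := fun h0 =>
    mem_support_iff.mp hd (by rw [coeff_pderiv, h0, zero_mul])
  have := hf _ (mem_support_iff.mpr hcoeff)
  rw [map_add, Finsupp.weight_single, smul_eq_mul, one_mul] at this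
  exact Nat.lt_of_add_lt_add_right this

lemma weight_lt_of_mem_support_hpos {n M : ℕ} {f : MvPolynomial ℕ+ F}
    (hf : ∀ d ∈ f.support, wt d < M + n) : ∀ d ∈ (hpos ε n f).support, wt d < M := by
  intro d hd
  by_cases hn : 0 < n
  · rw [hpos, dif_pos hn] at hd
    exact weight_lt_of_mem_support_pderiv ⟨n, hn⟩ hf d (support_smul hd)
  · rw [hpos, dif_neg hn, Module.End.one_apply] at hd
    simpa [show n = 0 by omega] using hf d hd

lemma weight_lt_of_mem_support_list_prod_hpos (L : List ℕ) {M : ℕ} {f : MvPolynomial ℕ+ F}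
    (hf : ∀ d ∈ f.support, wt d < M + L.sum) :
    ∀ d ∈ ((L.map (hpos ε)).prod f).support, wt d < M := by
  induction L generalizing M with
  | nil => simpa using hf
  | cons n L ih =>
    rw [List.map_cons, List.prod_cons, Module.End.mul_apply]
    refine weight_lt_of_mem_support_hpos ε (ih fun d hd => ?_)
    have := hf d hd
    rw [List.sum_cons] at this
    omega

lemma hMul_eq_zero_of_wdeg_lt {m : Multiset ℕ} {f : MvPolynomial ℕ+ F} (h : wdeg f < m.sum) :
    hMul ε m f = 0 := by
  have hsum : (Multiset.sort m (· ≥ ·)).sum = m.sum := by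
    rw [← Multiset.sum_coe, Multiset.sort_eq]
  refine support_eq_empty.mp (eq_empty_of_forall_notMem fun d hd => ?_)
  have := weight_lt_of_mem_support_list_prod_hpos ε _ (M := 0)
    (fun d hd => by rw [hsum]; have := weight_le_wdeg hd; omega) d hd
  omega

end Weight

section SelfAdjoint

variable {F : Type*} [Field F] (ε η τ : ℕ → F)

lemma X0op_eq_sum_range_of_wdeg_le {f : MvPolynomial ℕ+ F} {M : ℕ} (hM : wdeg f ≤ M) :
    X0op ε η τ f = ∑ N ∈ range (M + 1), ∑ μ : Nat.Partition N, ∑ ν : Nat.Partition N,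
      ((zMult μ.parts : F)⁻¹ * (μ.parts.map η).prod *
        (zMult ν.parts : F)⁻¹ * (ν.parts.map τ).prod) •
          (pMul F μ.parts * hMul ε ν.parts f) := by
  refine sum_subset (range_subset_range.mpr (by omega)) fun N _ hN => ?_
  have hlt : wdeg f < N := by rw [mem_range] at hN; omega
  have hzero (ν : Nat.Partition N) : hMul ε ν.parts f = 0 :=
    hMul_eq_zero_of_wdeg_lt ε (by rwa [ν.parts_sum])
  simp [hzero]

lemma Multiset.prod_map_pow_eq_pow_sum {M : Type*} [CommMonoid M] (c : M) (m : Multiset ℕ) :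
    (m.map (c ^ ·)).prod = c ^ m.sum := by
  induction m using Multiset.induction_on with
  | empty => simp
  | cons n m ih => rw [Multiset.map_cons, Multiset.prod_cons, ih, Multiset.sum_cons, pow_add]

lemma prod_map_eq_prod_map_mul_pow {c : F} (hητ : ∀ n : ℕ, 1 ≤ n → η n = τ n * c ^ n)
    {N : ℕ} (μ : Nat.Partition N) : (μ.parts.map η).prod = (μ.parts.map τ).prod * c ^ N := by
  rw [Multiset.map_congr rfl fun n hn => hητ n (μ.parts_pos hn), Multiset.prod_map_mul,
    Multiset.prod_map_pow_eq_pow_sum, μ.parts_sum]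

lemma bform_X0op_left (c : F) (hητ : ∀ n : ℕ, 1 ≤ n → η n = τ n * c ^ n)
    {f : MvPolynomial ℕ+ F} (g : MvPolynomial ℕ+ F) {M : ℕ} (hM : wdeg f ≤ M) :
    bform ε (X0op ε η τ f) g = ∑ N ∈ range (M + 1), ∑ μ : Nat.Partition N,
      ∑ ν : Nat.Partition N, ((zMult μ.parts : F)⁻¹ * (zMult ν.parts : F)⁻¹ *
        (μ.parts.map τ).prod * (ν.parts.map τ).prod * c ^ N) *
          bform ε (hMul ε ν.parts f) (hMul ε μ.parts g) := by
  simp only [X0op_eq_sum_range_of_wdeg_le ε η τ hM, bform_sum_left, bform_smul_left,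
    bform_pMul_mul, prod_map_eq_prod_map_mul_pow η τ hητ]
  refine sum_congr rfl fun N _ => sum_congr rfl fun μ _ => sum_congr rfl fun ν _ => ?_
  ring

lemma bform_X0op_comm (c : F) (hητ : ∀ n : ℕ, 1 ≤ n → η n = τ n * c ^ n)
    (f g : MvPolynomial ℕ+ F) : bform ε (X0op ε η τ f) g = bform ε f (X0op ε η τ g) := by
  rw [bform_comm ε f, bform_X0op_left ε η τ c hητ g (le_max_left (wdeg f) (wdeg g)),
    bform_X0op_left ε η τ c hητ f (le_max_right (wdeg f) (wdeg g))]
  refine sum_congr rfl fun N _ => ?_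
  rw [sum_comm]
  refine sum_congr rfl fun μ _ => sum_congr rfl fun ν _ => ?_
  rw [bform_comm ε (hMul ε μ.parts f)]
  ring

end SelfAdjoint

theorem macdonald_orthogonality_general
    (F : Type*) [Field F] (a b c : F)
    (ε η τ : ℕ → F)
    (hτ : ∀ n : ℕ, 1 ≤ n → τ n = 1 - a ^ n)
    (hη : ∀ n : ℕ, 1 ≤ n → η n = (1 - a ^ n) * c ^ n)
    (N : ℕ)
    (hsep : ∀ ρ ∈ partitionsOfWeight N, ∀ σ ∈ partitionsOfWeight N,
      ρ ≠ σ → eigval a b ρ ≠ eigval a b σ)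
    (l m : List ℕ) (hl : l ∈ partitionsOfWeight N) (hm : m ∈ partitionsOfWeight N)
    (hlm : l ≠ m)
    (Cl Cm : List ℕ → F)
    (hCl : (∀ μ ∈ partitionsOfWeight N, ¬ Dominates μ l → Cl μ = 0) ∧ Cl l = 1 ∧
      X0op ε η τ (∑ μ ∈ partitionsOfWeight N, Cl μ • qepsList ε μ) =
        eigval a b l • ∑ μ ∈ partitionsOfWeight N, Cl μ • qepsList ε μ)
    (hCm : (∀ μ ∈ partitionsOfWeight N, ¬ Dominates μ m → Cm μ = 0) ∧ Cm m = 1 ∧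
      X0op ε η τ (∑ μ ∈ partitionsOfWeight N, Cm μ • qepsList ε μ) =
        eigval a b m • ∑ μ ∈ partitionsOfWeight N, Cm μ • qepsList ε μ) :
    bform ε (∑ μ ∈ partitionsOfWeight N, Cl μ • qepsList ε μ)
      (∑ μ ∈ partitionsOfWeight N, Cm μ • qepsList ε μ) = 0 := by
  have hητ : ∀ n : ℕ, 1 ≤ n → η n = τ n * c ^ n := fun n hn => by rw [hη n hn, hτ n hn]
  exact bform_eq_zero_of_eigenvalue_ne ε (bform_X0op_comm ε η τ c hητ) hCl.2.2 hCm.2.2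
    (hsep l hl m hm hlm)

/-- **Corollary 4.5 (orthogonality)** : with pairwise distinct eigenvalues `e_ν` over
partitions `ν` of weight `N`, the eigenvectors `Q_λ = Σ_{μ ≥ λ} C_{λμ} q^ε_μ`
(`C_{λλ} = 1`, `X₀ Q_λ = e_λ Q_λ`) satisfy `⟨Q_λ, Q_μ⟩ = 0` for `λ ≠ μ`. -/
theorem macdonald_orthogonality
    (F : Type*) [Field F] [CharZero F] (a b c : F) (hc : c ≠ 0)
    (ha : ∀ n : ℕ, 1 ≤ n → a ^ n ≠ 1) (hb : ∀ n : ℕ, 1 ≤ n → b ^ n ≠ 1)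
    (ε η τ : ℕ → F)
    (hε : ∀ n : ℕ, 1 ≤ n → ε n = (b ^ n - 1) * c⁻¹ ^ n / (1 - a ^ n))
    (hτ : ∀ n : ℕ, 1 ≤ n → τ n = 1 - a ^ n)
    (hη : ∀ n : ℕ, 1 ≤ n → η n = (1 - a ^ n) * c ^ n)
    (N : ℕ)
    (hsep : ∀ ρ ∈ partitionsOfWeight N, ∀ σ ∈ partitionsOfWeight N,
      ρ ≠ σ → eigval a b ρ ≠ eigval a b σ)
    (l m : List ℕ) (hl : l ∈ partitionsOfWeight N) (hm : m ∈ partitionsOfWeight N)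
    (hlm : l ≠ m)
    (Cl Cm : List ℕ → F)
    (hCl : (∀ μ ∈ partitionsOfWeight N, ¬ Dominates μ l → Cl μ = 0) ∧ Cl l = 1 ∧
      X0op ε η τ (∑ μ ∈ partitionsOfWeight N, Cl μ • qepsList ε μ) =
        eigval a b l • ∑ μ ∈ partitionsOfWeight N, Cl μ • qepsList ε μ)
    (hCm : (∀ μ ∈ partitionsOfWeight N, ¬ Dominates μ m → Cm μ = 0) ∧ Cm m = 1 ∧
      X0op ε η τ (∑ μ ∈ partitionsOfWeight N, Cm μ • qepsList ε μ) =
        eigval a b m • ∑ μ ∈ partitionsOfWeight N, Cm μ • qepsList ε μ) :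
    bform ε (∑ μ ∈ partitionsOfWeight N, Cl μ • qepsList ε μ)
      (∑ μ ∈ partitionsOfWeight N, Cm μ • qepsList ε μ) = 0 :=
  macdonald_orthogonality_general F a b c ε η τ hτ hη N hsep l m hl hm hlm Cl Cm hCl hCm
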